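/- In an intersecting (2,m)-system covering V, if τ(G) = m + 1, then |V| ≤ 2(m + 1); in particular, if m ≥ 2 then |V| ≤ (m+2 choose 2). -/

import Mathlib

open Finset

/-- The minimum cardinality of a set `S ⊆ A` meeting every member `q i`, `i ∈ s`,
of a set system (a transversal number). -/
noncomputable def transversalNum {α ι : Type*} [DecidableEq α]
    (A : Finset α) (s : Finset ι) (q : ι → Finset α) : ℕ :=
  sInf {n : ℕ | ∃ S : Finset α, S ⊆ A ∧ S.card = n ∧ ∀ i ∈ s, (S ∩ q i).Nonempty}

/-!
Regard the pairs `p i` as the edges of a graph `G`. Since `M j` has size `m` and meets every edge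
but `p j`, `T = M j ∪ {x}` with `x ∈ p j` is a minimum transversal, and every vertex of `M j` lies
on an edge (else removing it from `T` leaves a smaller transversal); as the `M j` cover `V`, `G` has
no isolated vertex.

The heart of the proof is Hall's condition `|W| ≤ |N(W)|` for independent sets `W`, by induction on
`W`. If no two vertices of `W` share a neighbour we are done. If `w, w' ∈ W` share the neighbour `t`,
then `w' ∈ M j` for the edge `p j = {w, t}`. As `(M j \ W) ∪ N(W ∩ M j) ∪ {t}` meets every edge, it
has at least `m + 1` elements, so `W ∩ M j` has at least `|W ∩ M j|` neighbours outside `M j ∪ {t}`;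
all neighbours of `W \ M j` lie in `M j ∪ {t}` and number at least `|W \ M j|` by induction.

Applied to `W = V \ T`, whose neighbours lie in `T`, this gives `|V| ≤ 2|T| = 2(m + 1)`.
-/

lemma transversalNum_le_card {α ι : Type*} [DecidableEq α] {A S : Finset α} {s : Finset ι}
    {q : ι → Finset α} (hSA : S ⊆ A) (hS : ∀ i ∈ s, (S ∩ q i).Nonempty) :
    transversalNum A s q ≤ S.card :=
  Nat.sInf_le ⟨S, hSA, rfl, hS⟩

lemma two_mul_succ_le_choose_two {m : ℕ} (hm : 2 ≤ m) : 2 * (m + 1) ≤ (m + 2).choose 2 := by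
  rw [Nat.choose_two_right, Nat.le_div_iff_mul_le two_pos, show m + 2 - 1 = m + 1 from rfl]
  nlinarith

lemma eq_or_eq_of_card_eq_two {α : Type*} [DecidableEq α] {s : Finset α} {a b c : α}
    (hs : s.card = 2) (ha : a ∈ s) (hb : b ∈ s) (hab : a ≠ b) (hc : c ∈ s) : c = a ∨ c = b := by
  have hs' : s = {a, b} :=
    (eq_of_subset_of_card_le (insert_subset ha (singleton_subset_iff.2 hb))
      (by rw [hs, card_pair hab])).symm
  simpa [hs'] using hc

namespace EdgeFamily

variable {α ι : Type*} {p : ι → Finset α}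

def IsIndependent (p : ι → Finset α) (W : Finset α) : Prop :=
  ∀ i, ¬ p i ⊆ W

lemma IsIndependent.mono {W W' : Finset α} (hW : IsIndependent p W') (h : W ⊆ W') :
    IsIndependent p W :=
  fun i hi => hW i (hi.trans h)

open scoped Classical in
noncomputable def nbhd [Fintype α] (p : ι → Finset α) (W : Finset α) : Finset α :=
  univ.filter fun t => ∃ i, ∃ w ∈ W, w ≠ t ∧ w ∈ p i ∧ t ∈ p i

lemma mem_nbhd [Fintype α] {W : Finset α} {t : α} :
    t ∈ nbhd p W ↔ ∃ i, ∃ w ∈ W, w ≠ t ∧ w ∈ p i ∧ t ∈ p i := by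
  simp [nbhd]

lemma nbhd_mono [Fintype α] {W W' : Finset α} (h : W ⊆ W') : nbhd p W ⊆ nbhd p W' := by
  intro t ht
  obtain ⟨i, w, hw, hwt, hwi, hti⟩ := mem_nbhd.1 ht
  exact mem_nbhd.2 ⟨i, w, h hw, hwt, hwi, hti⟩

variable [DecidableEq α]

def IsTransversal (p : ι → Finset α) (S : Finset α) : Prop :=
  ∀ i, (S ∩ p i).Nonempty

lemma isTransversal_insert {C : Finset α} {j : ι} {x : α} (hx : x ∈ p j)
    (hC : ∀ i ≠ j, (C ∩ p i).Nonempty) : IsTransversal p (insert x C) := by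
  intro i
  by_cases hij : i = j
  · exact ⟨x, mem_inter.2 ⟨mem_insert_self x C, hij ▸ hx⟩⟩
  · exact (hC i hij).mono (inter_subset_inter_right (subset_insert x C))

lemma IsTransversal.erase {S : Finset α} {v : α} (hS : IsTransversal p S) (hv : ∀ i, v ∉ p i) :
    IsTransversal p (S.erase v) := by
  intro i
  obtain ⟨x, hx⟩ := hS i
  obtain ⟨hxS, hxi⟩ := mem_inter.1 hx
  exact ⟨x, mem_inter.2 ⟨mem_erase.2 ⟨fun h => hv i (h ▸ hxi), hxS⟩, hxi⟩⟩

lemma IsTransversal.isIndependent_compl [Fintype α] {T : Finset α} (hT : IsTransversal p T) :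
    IsIndependent p Tᶜ := by
  intro i hi
  obtain ⟨x, hx⟩ := hT i
  obtain ⟨hxT, hxi⟩ := mem_inter.1 hx
  exact mem_compl.1 (hi hxi) hxT

lemma IsIndependent.notMem {W : Finset α} (hW : IsIndependent p W) (hp : ∀ i, (p i).card = 2)
    {i : ι} {w t : α} (hw : w ∈ W) (hwt : w ≠ t) (hwi : w ∈ p i) (hti : t ∈ p i) : t ∉ W := by
  intro htW
  refine hW i fun c hc => ?_
  rcases eq_or_eq_of_card_eq_two (hp i) hwi hti hwt hc with rfl | rfl <;> assumption

lemma IsIndependent.disjoint_nbhd [Fintype α] {W : Finset α} (hW : IsIndependent p W)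
    (hp : ∀ i, (p i).card = 2) : Disjoint W (nbhd p W) := by
  refine disjoint_right.2 fun t ht => ?_
  obtain ⟨i, w, hw, hwt, hwi, hti⟩ := mem_nbhd.1 ht
  exact hW.notMem hp hw hwt hwi hti

section Critical

variable {m : ℕ}

lemma disjoint_of_card_le (hτ : ∀ S, IsTransversal p S → m + 1 ≤ S.card) {C : Finset α} {j : ι}
    (hCm : C.card ≤ m) (hC : ∀ i ≠ j, (C ∩ p i).Nonempty) : Disjoint C (p j) := by
  rw [disjoint_iff_inter_eq_empty]
  by_contra hCj
  have hCT : IsTransversal p C := fun i => by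
    by_cases hij : i = j
    · exact hij ▸ nonempty_iff_ne_empty.2 hCj
    · exact hC i hij
  have := hτ C hCT
  omega

lemma exists_mem_of_mem_isTransversal (hτ : ∀ S, IsTransversal p S → m + 1 ≤ S.card)
    {T : Finset α} (hT : IsTransversal p T) (hTm : T.card ≤ m + 1) {v : α} (hv : v ∈ T) :
    ∃ i, v ∈ p i := by
  by_contra! hiso
  have := hτ _ (hT.erase hiso)
  rw [card_erase_of_mem hv] at this
  omega

variable [Fintype α]

lemma card_inter_le_card_nbhd_sdiff (hp : ∀ i, (p i).card = 2)
    (hτ : ∀ S, IsTransversal p S → m + 1 ≤ S.card) {W C : Finset α} {j : ι} {t : α}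
    (hW : IsIndependent p W) (ht : t ∈ p j) (hCm : C.card ≤ m)
    (hC : ∀ i ≠ j, (C ∩ p i).Nonempty) :
    (W ∩ C).card ≤ (nbhd p (W ∩ C) \ insert t C).card := by
  set X := nbhd p (W ∩ C) \ insert t C
  have hS : IsTransversal p (insert t (C \ W ∪ X)) := by
    intro i
    by_cases hij : i = j
    · exact ⟨t, by simp [hij, ht]⟩
    obtain ⟨u, hu⟩ := hC i hij
    obtain ⟨huC, hui⟩ := mem_inter.1 hu
    by_cases huW : u ∈ W
    · obtain ⟨u', hu'i, hu'u⟩ := exists_mem_ne (by rw [hp i]; norm_num) u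
      have hu'W : u' ∉ W := hW.notMem hp huW hu'u.symm hui hu'i
      have hu'X : u' ∉ C → u' ≠ t → u' ∈ X := fun hu'C hu't => by
        simp only [X, mem_sdiff, mem_insert, mem_nbhd, mem_inter, not_or]
        exact ⟨⟨i, u, ⟨huW, huC⟩, hu'u.symm, hui, hu'i⟩, hu't, hu'C⟩
      refine ⟨u', mem_inter.2 ⟨?_, hu'i⟩⟩
      by_cases hu'C : u' ∈ C
      · simp [hu'C, hu'W]
      by_cases hu't : u' = t
      · simp [hu't]
      · simp [hu'X hu'C hu't]
    · exact ⟨u, by simp [huC, huW, hui]⟩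
  have hSm := hτ _ hS
  have hSins := card_insert_le t (C \ W ∪ X)
  have hSunion := card_union_le (C \ W) X
  have hCsplit : (C \ W).card + (W ∩ C).card = C.card := by
    rw [inter_comm]; exact card_sdiff_add_card_inter C W
  omega

lemma nbhd_subset_insert (hp : ∀ i, (p i).card = 2) {B C : Finset α} {j : ι} {t : α}
    (ht : t ∈ p j) (htB : t ∉ B) (hBC : Disjoint B C) (hC : ∀ i ≠ j, (C ∩ p i).Nonempty) :
    nbhd p B ⊆ insert t C := by
  intro t' ht'
  obtain ⟨i, b, hb, hbt', hbi, ht'i⟩ := mem_nbhd.1 ht'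
  rw [mem_insert]
  by_cases hij : i = j
  · subst hij
    rcases eq_or_eq_of_card_eq_two (hp i) hbi ht'i hbt' ht with rfl | rfl
    · exact absurd hb htB
    · exact Or.inl rfl
  · obtain ⟨u, hu⟩ := hC i hij
    obtain ⟨huC, hui⟩ := mem_inter.1 hu
    rcases eq_or_eq_of_card_eq_two (hp i) hbi ht'i hbt' hui with rfl | rfl
    · exact absurd huC (disjoint_left.1 hBC hb)
    · exact Or.inr huC

lemma card_le_card_nbhd_of_common_neighbour (hp : ∀ i, (p i).card = 2)
    (hτ : ∀ S, IsTransversal p S → m + 1 ≤ S.card) (M : ι → Finset α)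
    (hMm : ∀ j, (M j).card ≤ m) (hMp : ∀ i j, i ≠ j → (M j ∩ p i).Nonempty)
    {W : Finset α} (hW : IsIndependent p W)
    (ih : ∀ B ⊂ W, IsIndependent p B → B.card ≤ (nbhd p B).card)
    {w w' t : α} {i j : ι} (hw : w ∈ W) (hw' : w' ∈ W) (hww' : w ≠ w') (hwt : w ≠ t)
    (hwj : w ∈ p j) (htj : t ∈ p j) (hw'i : w' ∈ p i) (hti : t ∈ p i) :
    W.card ≤ (nbhd p W).card := by
  have hC : ∀ i ≠ j, (M j ∩ p i).Nonempty := fun i hij => hMp i j hij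
  have htW : t ∉ W := hW.notMem hp hw hwt hwj htj
  have htC : t ∉ M j := fun h => disjoint_left.1 (disjoint_of_card_le hτ (hMm j) hC) h htj
  have hij : i ≠ j := by
    rintro rfl
    rcases eq_or_eq_of_card_eq_two (hp i) hwj htj hwt hw'i with rfl | rfl
    · exact hww' rfl
    · exact htW hw'
  have hw'C : w' ∈ M j := by
    obtain ⟨u, hu⟩ := hC i hij
    obtain ⟨huC, hui⟩ := mem_inter.1 hu
    rcases eq_or_eq_of_card_eq_two (hp i) hw'i hti (fun h => htW (h ▸ hw')) hui with rfl | rfl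
    · exact huC
    · exact absurd huC htC
  have hB : W \ M j ⊂ W := (ssubset_iff_of_subset sdiff_subset).2 ⟨w', hw', by simp [hw'C]⟩
  have hNB : nbhd p (W \ M j) ⊆ insert t (M j) :=
    nbhd_subset_insert hp htj (fun h => htW (mem_sdiff.1 h).1) sdiff_disjoint hC
  calc W.card = (W \ M j).card + (W ∩ M j).card := (card_sdiff_add_card_inter W (M j)).symm
    _ ≤ (nbhd p (W \ M j)).card + (nbhd p (W ∩ M j) \ insert t (M j)).card :=
        add_le_add (ih _ hB (hW.mono sdiff_subset))
          (card_inter_le_card_nbhd_sdiff hp hτ hW htj (hMm j) hC)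
    _ = (nbhd p (W \ M j) ∪ (nbhd p (W ∩ M j) \ insert t (M j))).card :=
        (card_union_of_disjoint (disjoint_sdiff.mono_left hNB)).symm
    _ ≤ (nbhd p W).card :=
        card_le_card (union_subset (nbhd_mono sdiff_subset)
          (sdiff_subset.trans (nbhd_mono inter_subset_left)))

theorem card_le_card_nbhd (hp : ∀ i, (p i).card = 2)
    (hτ : ∀ S, IsTransversal p S → m + 1 ≤ S.card) (M : ι → Finset α)
    (hMm : ∀ j, (M j).card ≤ m) (hMp : ∀ i j, i ≠ j → (M j ∩ p i).Nonempty)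
    (hiso : ∀ v, ∃ i, v ∈ p i) (W : Finset α) (hW : IsIndependent p W) :
    W.card ≤ (nbhd p W).card := by
  induction W using Finset.strongInduction with
  | H W ih =>
  have hnbr : ∀ w, ∃ i t, w ≠ t ∧ w ∈ p i ∧ t ∈ p i := fun w => by
    obtain ⟨i, hwi⟩ := hiso w
    obtain ⟨t, hti, htw⟩ := exists_mem_ne (by rw [hp i]; norm_num) w
    exact ⟨i, t, htw.symm, hwi, hti⟩
  choose e f hf using hnbr
  by_cases hinj : Set.InjOn f W
  · exact card_le_card_of_injOn f
      (fun w hw => mem_nbhd.2 ⟨e w, w, hw, (hf w).1, (hf w).2⟩) hinj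
  obtain ⟨w, hw, w', hw', hff, hww'⟩ : ∃ w ∈ W, ∃ w' ∈ W, f w = f w' ∧ w ≠ w' := by
    simpa [Set.InjOn] using hinj
  exact card_le_card_nbhd_of_common_neighbour hp hτ M hMm hMp hW ih hw hw' hww' (hf w).1
    (hf w).2.1 (hf w).2.2 (hf w').2.1 (hff ▸ (hf w').2.2)

theorem card_le_two_mul_card (hp : ∀ i, (p i).card = 2)
    (hτ : ∀ S, IsTransversal p S → m + 1 ≤ S.card) (M : ι → Finset α)
    (hMm : ∀ j, (M j).card ≤ m) (hMp : ∀ i j, i ≠ j → (M j ∩ p i).Nonempty)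
    (hiso : ∀ v, ∃ i, v ∈ p i) {T : Finset α} (hT : IsTransversal p T) :
    Fintype.card α ≤ 2 * T.card := by
  have hI := hT.isIndependent_compl
  have hHall := card_le_card_nbhd hp hτ M hMm hMp hiso Tᶜ hI
  have hN : nbhd p Tᶜ ⊆ T := by
    simpa using subset_compl_iff_disjoint_left.2 (hI.disjoint_nbhd hp)
  have := card_le_card hN
  rw [card_compl] at hHall
  omega

end Critical

end EdgeFamily

open EdgeFamily

/-- tau_max_order_bound -/
theorem tau_max_order_bound {α : Type*} [Fintype α] [DecidableEq α]
    (m ℓ : ℕ) (hℓ : 3 ≤ ℓ)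
    (p M : Fin ℓ → Finset α)
    (hp : ∀ i, (p i).card = 2)
    (hM : ∀ i, (M i).card = m)
    (hpM : ∀ i j, p i ∩ M j = ∅ ↔ i = j)
    (hcover : Finset.univ.biUnion M = (Finset.univ : Finset α))
    (htau : transversalNum (Finset.univ : Finset α) Finset.univ p = m + 1) :
    Fintype.card α ≤ 2 * (m + 1) ∧ (2 ≤ m → Fintype.card α ≤ (m + 2).choose 2) := by
  have hτ : ∀ S, IsTransversal p S → m + 1 ≤ S.card := fun S hS =>
    htau ▸ transversalNum_le_card (subset_univ S) fun i _ => hS i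
  have hMp : ∀ i j, i ≠ j → (M j ∩ p i).Nonempty := fun i j hij => by
    rw [inter_comm, nonempty_iff_ne_empty]
    exact fun h => hij ((hpM i j).1 h)
  choose x hx using fun j => card_pos.1 (by rw [hp j]; norm_num : 0 < (p j).card)
  have hT : ∀ j, IsTransversal p (insert (x j) (M j)) := fun j =>
    isTransversal_insert (hx j) fun i hij => hMp i j hij
  have hTm : ∀ j, (insert (x j) (M j)).card ≤ m + 1 := fun j => hM j ▸ card_insert_le _ _
  have hiso : ∀ v, ∃ i, v ∈ p i := fun v => by
    obtain ⟨j, -, hv⟩ := mem_biUnion.1 (hcover ▸ mem_univ v : v ∈ univ.biUnion M)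
    exact exists_mem_of_mem_isTransversal hτ (hT j) (hTm j) (mem_insert_of_mem hv)
  let j₀ : Fin ℓ := ⟨0, by omega⟩
  have hV := card_le_two_mul_card hp hτ M (fun j => (hM j).le) hMp hiso (hT j₀)
  have := hTm j₀
  exact ⟨by omega, fun hm => by have := two_mul_succ_le_choose_two hm; omega⟩
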